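/- arXiv:2511.14745 — 8 statements merged into one kernel-verified Lean document; each statement's English description precedes it below -/
import Mathlib

section
/- Let Z be a complete separable metric space with its Borel σ-algebra and let β, γ, ε > 0 with εβ/γ < 1. Suppose A is a map from probability measures on Z to ℝ^d that is (β/γ)-Lipschitz in coupling form: for all probability measures μ, ν on Z and every coupling π of μ and ν, ‖A(μ) − A(ν)‖ ≤ (β/γ) ∫ dist(z, z') dπ(z, z'). Suppose D₁ : ℝ^d → P(Z) is ε-sensitive in coupling form. Define the level-1 retraining map S(θ) := A(D₁(θ)), the level-k distribution maps D_k(θ) := D₁(S^{k−1}(θ)) for k ≥ 1, and for nonnegative weights (α_k)_{k≥1} with Σ_{k≥1} α_k = 1 the mixture distribution map D̄(θ) := Σ_{k≥1} α_k D_k(θ) and the retraining map T(θ) := A(D̄(θ)). Then T is ρ-Lipschitz with ρ := Σ_{k≥1} α_k (εβ/γ)^k < 1; consequently T has a unique fixed point θ*, and the repeated risk minimization iterates θ_{t+1} := T(θ_t) satisfy ‖θ_t − θ*‖ ≤ ρ^t ‖θ_0 − θ*‖ for all t. -/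
open MeasureTheory
open scoped NNReal ENNReal

/-!
Mixing couplings of the level-`k` distributions with the population weights gives a coupling
of the mixed distributions whose transport cost is the weighted mean of the individual costs.
Since the level-`k` distribution map `D₁ ∘ S^[k-1]` is `ε (εβ/γ)^(k-1)`-sensitive, the mixture
map `D̄` is `∑ αₖ ε (εβ/γ)^(k-1)`-sensitive, and composing with the `(β/γ)`-Lipschitz learner
makes `T` a contraction with rate `ρ = ∑ αₖ (εβ/γ)^k ≤ εβ/γ < 1`. Banach's fixed point
theorem does the rest.
-/

/-- A coupling of two probability measures `μ` and `ν` on `Z` is a measure on `Z × Z`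
whose first marginal is `μ` and whose second marginal is `ν`. -/
def IsCoupling {Z : Type*} [MeasurableSpace Z] (π : Measure (Z × Z)) (μ ν : Measure Z) : Prop :=
  π.map Prod.fst = μ ∧ π.map Prod.snd = ν

section Coupling

variable {X Y Z E ι : Type*} [MeasurableSpace Z]

theorem IsCoupling.sum_smul {π : ι → Measure (Z × Z)} {μ ν : ι → Measure Z} (w : ι → ℝ≥0)
    (h : ∀ i, IsCoupling (π i) (μ i) (ν i)) :
    IsCoupling (Measure.sum fun i => w i • π i) (Measure.sum fun i => w i • μ i)
      (Measure.sum fun i => w i • ν i) := by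
  constructor
  · simp only [Measure.map_sum measurable_fst.aemeasurable, Measure.map_smul, (h _).1]
  · simp only [Measure.map_sum measurable_snd.aemeasurable, Measure.map_smul, (h _).2]

theorem isProbabilityMeasure_sum_smul {μ : ι → Measure Z} (hμ : ∀ i, IsProbabilityMeasure (μ i))
    {w : ι → ℝ≥0} (hw : HasSum w 1) : IsProbabilityMeasure (Measure.sum fun i => w i • μ i) := by
  constructor
  simp only [Measure.sum_apply _ MeasurableSet.univ, Measure.smul_apply, measure_univ,
    ENNReal.smul_def, smul_eq_mul, mul_one]
  exact (ENNReal.hasSum_coe.2 hw).tsum_eq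

theorem integral_sum_smul_le_tsum {α : Type*} [MeasurableSpace α] {π : ι → Measure α}
    {f : α → ℝ} (hf : 0 ≤ f) (w : ι → ℝ≥0) {b : ι → ℝ} (hb : ∀ i, ∫ x, f x ∂π i ≤ b i)
    (hsum : Summable fun i => (w i : ℝ) * b i) :
    ∫ x, f x ∂(Measure.sum fun i => w i • π i) ≤ ∑' i, (w i : ℝ) * b i := by
  have hterm : ∀ i, ∫ x, f x ∂(w i • π i) ≤ w i * b i := fun i => by
    rw [integral_smul_nnreal_measure, NNReal.smul_def, smul_eq_mul]
    exact mul_le_mul_of_nonneg_left (hb i) (w i).coe_nonneg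
  have hterm_nonneg : ∀ i, 0 ≤ ∫ x, f x ∂(w i • π i) := fun i => integral_nonneg hf
  by_cases hI : Integrable f (Measure.sum fun i => w i • π i)
  · rw [integral_sum_measure hI]
    exact (hsum.of_nonneg_of_le hterm_nonneg hterm).tsum_le_tsum hterm hsum
  · rw [integral_undef hI]
    exact tsum_nonneg fun i => (hterm_nonneg i).trans (hterm i)

variable [PseudoMetricSpace X] [PseudoMetricSpace Y] [PseudoMetricSpace Z] [PseudoMetricSpace E]

def CouplingSensitiveWith (ε : ℝ) (D : X → Measure Z) : Prop :=
  ∀ x y, ∃ π : Measure (Z × Z), IsCoupling π (D x) (D y) ∧ ∫ p, dist p.1 p.2 ∂π ≤ ε * dist x y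

def CouplingLipschitzWith (L : ℝ) (A : Measure Z → E) : Prop :=
  ∀ μ ν, IsProbabilityMeasure μ → IsProbabilityMeasure ν →
    ∀ π : Measure (Z × Z), IsCoupling π μ ν → dist (A μ) (A ν) ≤ L * ∫ p, dist p.1 p.2 ∂π

theorem CouplingSensitiveWith.comp_lipschitzWith {ε : ℝ} {D : X → Measure Z} {K : ℝ≥0}
    {f : Y → X} (hD : CouplingSensitiveWith ε D) (hε : 0 ≤ ε) (hf : LipschitzWith K f) :
    CouplingSensitiveWith (ε * K) (D ∘ f) := by
  intro x y
  obtain ⟨π, hπ, hcost⟩ := hD (f x) (f y)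
  refine ⟨π, hπ, hcost.trans ?_⟩
  rw [mul_assoc]
  exact mul_le_mul_of_nonneg_left (hf.dist_le_mul x y) hε

theorem CouplingSensitiveWith.sum_smul {ε : ι → ℝ} {D : ι → X → Measure Z}
    (hD : ∀ i, CouplingSensitiveWith (ε i) (D i)) (w : ι → ℝ≥0)
    (hsum : Summable fun i => (w i : ℝ) * ε i) :
    CouplingSensitiveWith (∑' i, (w i : ℝ) * ε i) fun x => Measure.sum fun i => w i • D i x := by
  intro x y
  choose π hπ hcost using fun i => hD i x y
  refine ⟨_, IsCoupling.sum_smul w hπ, ?_⟩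
  calc ∫ p, dist p.1 p.2 ∂(Measure.sum fun i => w i • π i)
      ≤ ∑' i, (w i : ℝ) * (ε i * dist x y) :=
        integral_sum_smul_le_tsum (fun _ => dist_nonneg) w hcost
          (by simpa only [mul_assoc] using hsum.mul_right (dist x y))
    _ = (∑' i, (w i : ℝ) * ε i) * dist x y := by
        rw [← tsum_mul_right]
        simp only [mul_assoc]

theorem CouplingLipschitzWith.lipschitzWith_comp {L ε : ℝ} {K : ℝ≥0} {A : Measure Z → E}
    {D : X → Measure Z} (hA : CouplingLipschitzWith L A) (hL : 0 ≤ L)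
    (hD : CouplingSensitiveWith ε D) (hprob : ∀ x, IsProbabilityMeasure (D x)) (hK : L * ε = K) :
    LipschitzWith K (A ∘ D) := LipschitzWith.of_dist_le_mul fun x y => by
  obtain ⟨π, hπ, hcost⟩ := hD x y
  calc dist (A (D x)) (A (D y)) ≤ L * ∫ p, dist p.1 p.2 ∂π := hA _ _ (hprob x) (hprob y) π hπ
    _ ≤ L * (ε * dist x y) := mul_le_mul_of_nonneg_left hcost hL
    _ = K * dist x y := by rw [← hK, mul_assoc]

end Coupling

theorem summable_nnreal_mul_pow {w : ℕ → ℝ≥0} (hw : Summable w) {c : ℝ} (hc0 : 0 ≤ c)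
    (hc1 : c ≤ 1) : Summable fun k => (w k : ℝ) * c ^ k :=
  (NNReal.summable_coe.2 hw).of_nonneg_of_le (fun _ => by positivity)
    fun k => mul_le_of_le_one_right (w k).coe_nonneg (pow_le_one₀ hc0 hc1)

theorem tsum_nnreal_mul_pow_succ_le {w : ℕ → ℝ≥0} (hw : HasSum w 1) {c : ℝ} (hc0 : 0 ≤ c)
    (hc1 : c ≤ 1) : ∑' k, (w k : ℝ) * c ^ (k + 1) ≤ c :=
  calc ∑' k, (w k : ℝ) * c ^ (k + 1) = (∑' k, (w k : ℝ) * c ^ k) * c := by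
        rw [← tsum_mul_right]
        simp only [pow_succ, mul_assoc]
    _ ≤ (∑' k, (w k : ℝ)) * c := by
        refine mul_le_mul_of_nonneg_right ?_ hc0
        exact (summable_nnreal_mul_pow hw.summable hc0 hc1).tsum_le_tsum
          (fun k => mul_le_of_le_one_right (w k).coe_nonneg (pow_le_one₀ hc0 hc1))
          (NNReal.summable_coe.2 hw.summable)
    _ = c := by rw [← NNReal.coe_tsum, hw.tsum_eq, NNReal.coe_one, one_mul]

theorem level_k_retraining_convergence_general
    {Z : Type*} [MetricSpace Z]
    [MeasurableSpace Z] {d : ℕ}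
    (β γ ε : ℝ) (hβ : 0 < β) (hγ : 0 < γ) (hε : 0 < ε) (hcontr : ε * β / γ < 1)
    -- the learner's risk minimizer, assumed `(β/γ)`-Lipschitz in coupling form
    (A : Measure Z → EuclideanSpace ℝ (Fin d))
    (hA : ∀ μ ν : Measure Z, IsProbabilityMeasure μ → IsProbabilityMeasure ν →
      ∀ π : Measure (Z × Z), IsCoupling π μ ν →
        ‖A μ - A ν‖ ≤ β / γ * ∫ p, dist p.1 p.2 ∂π)
    -- the level-1 distribution map, assumed `ε`-sensitive in coupling form
    (D₁ : EuclideanSpace ℝ (Fin d) → Measure Z)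
    (hD₁prob : ∀ θ, IsProbabilityMeasure (D₁ θ))
    (hD₁sens : ∀ θ θ', ∃ π : Measure (Z × Z), IsCoupling π (D₁ θ) (D₁ θ') ∧
      ∫ p, dist p.1 p.2 ∂π ≤ ε * ‖θ - θ'‖)
    -- nonnegative mixture weights summing to one: `α k` is the fraction of level-`(k+1)` thinkers
    (α : ℕ → ℝ≥0) (hα : ∑' k, α k = 1)
    -- the level-1 retraining map `S(θ) = A(D₁(θ))`
    (S : EuclideanSpace ℝ (Fin d) → EuclideanSpace ℝ (Fin d))
    (hS : ∀ θ, S θ = A (D₁ θ))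
    -- the mixture distribution map `D̄(θ) = ∑_{k≥1} αₖ D_k(θ)` with `D_k(θ) = D₁(S^{k-1}(θ))`
    (Dbar : EuclideanSpace ℝ (Fin d) → Measure Z)
    (hDbar : ∀ θ, Dbar θ = Measure.sum fun k => α k • D₁ (S^[k] θ))
    -- the retraining map on the mixed population
    (T : EuclideanSpace ℝ (Fin d) → EuclideanSpace ℝ (Fin d))
    (hT : ∀ θ, T θ = A (Dbar θ)) :
    ∃ ρ : ℝ, ρ = (∑' k : ℕ, (α k : ℝ) * (ε * β / γ) ^ (k + 1)) ∧ ρ < 1 ∧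
      (∀ θ θ', ‖T θ - T θ'‖ ≤ ρ * ‖θ - θ'‖) ∧
      ∃ θstar, T θstar = θstar ∧ (∀ θ', T θ' = θ' → θ' = θstar) ∧
        ∀ (θ₀ : EuclideanSpace ℝ (Fin d)) (t : ℕ),
          ‖T^[t] θ₀ - θstar‖ ≤ ρ ^ t * ‖θ₀ - θstar‖ := by
  have hL : 0 ≤ β / γ := by positivity
  obtain ⟨K, hK⟩ : ∃ K : ℝ≥0, (K : ℝ) = ε * β / γ := ⟨⟨_, by positivity⟩, rfl⟩
  obtain ⟨P, hP⟩ : ∃ P : ℝ≥0, (P : ℝ) = ∑' k, (α k : ℝ) * (ε * β / γ) ^ (k + 1) :=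
    ⟨⟨_, tsum_nonneg fun _ => by positivity⟩, rfl⟩
  have hα_sum : HasSum α 1 := by
    by_cases h : Summable α
    · exact hα ▸ h.hasSum
    · rw [tsum_eq_zero_of_not_summable h] at hα
      exact absurd hα zero_ne_one
  have hA' : CouplingLipschitzWith (β / γ) A := fun μ ν hμ hν π hπ => by
    rw [dist_eq_norm]; exact hA μ ν hμ hν π hπ
  have hD₁ : CouplingSensitiveWith ε D₁ := fun θ θ' => by
    rw [dist_eq_norm]; exact hD₁sens θ θ'
  have hS_lip : LipschitzWith K S := by
    rw [show S = A ∘ D₁ from funext hS]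
    exact hA'.lipschitzWith_comp hL hD₁ hD₁prob (by rw [hK]; ring)
  have hDbar_sens : CouplingSensitiveWith (∑' k, (α k : ℝ) * (ε * ↑(K ^ k))) Dbar := by
    rw [funext hDbar]
    refine .sum_smul (fun k => hD₁.comp_lipschitzWith hε.le (hS_lip.iterate k)) α ?_
    exact ((summable_nnreal_mul_pow hα_sum.summable K.coe_nonneg (hK ▸ hcontr).le).mul_left
      ε).congr fun k => by push_cast; ring
  have hDbar_prob θ : IsProbabilityMeasure (Dbar θ) :=
    hDbar θ ▸ isProbabilityMeasure_sum_smul (fun k => hD₁prob _) hα_sum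
  have hT_lip : LipschitzWith P T := by
    rw [show T = A ∘ Dbar from funext hT]
    refine hA'.lipschitzWith_comp hL hDbar_sens hDbar_prob ?_
    rw [hP, ← tsum_mul_left]
    congr 1 with k
    rw [NNReal.coe_pow, hK]
    ring
  have hP1 : (P : ℝ) < 1 :=
    hP ▸ (tsum_nnreal_mul_pow_succ_le hα_sum (by positivity) hcontr.le).trans_lt hcontr
  have hT_contr : ContractingWith P T := ⟨by exact_mod_cast hP1, hT_lip⟩
  refine ⟨P, hP, hP1, fun θ θ' => by simpa only [dist_eq_norm] using hT_lip.dist_le_mul θ θ',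
    hT_contr.fixedPoint T, hT_contr.fixedPoint_isFixedPt, fun θ' h => hT_contr.fixedPoint_unique h,
    fun θ₀ t => ?_⟩
  simpa only [(hT_contr.fixedPoint_isFixedPt.iterate t).eq, dist_eq_norm, NNReal.coe_pow] using
    (hT_lip.iterate t).dist_le_mul θ₀ (hT_contr.fixedPoint T)

/-- **Retraining with level-`k` thinkers** (Theorem 3.1).
Here `α k` denotes the fraction of level-`(k+1)` thinkers, for `k = 0, 1, 2, …`, so that
`D₁ (S^[k] θ)` is the distribution induced by the level-`(k+1)` thinkers, and the rate is
`ρ = ∑_{k≥1} αₖ (εβ/γ)^k = ∑' (k : ℕ), α k * (εβ/γ)^(k+1)`. -/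
theorem level_k_retraining_convergence
    {Z : Type*} [MetricSpace Z] [CompleteSpace Z] [TopologicalSpace.SeparableSpace Z]
    [MeasurableSpace Z] [BorelSpace Z] {d : ℕ}
    (β γ ε : ℝ) (hβ : 0 < β) (hγ : 0 < γ) (hε : 0 < ε) (hcontr : ε * β / γ < 1)
    -- the learner's risk minimizer, assumed `(β/γ)`-Lipschitz in coupling form
    (A : Measure Z → EuclideanSpace ℝ (Fin d))
    (hA : ∀ μ ν : Measure Z, IsProbabilityMeasure μ → IsProbabilityMeasure ν →
      ∀ π : Measure (Z × Z), IsCoupling π μ ν →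
        ‖A μ - A ν‖ ≤ β / γ * ∫ p, dist p.1 p.2 ∂π)
    -- the level-1 distribution map, assumed `ε`-sensitive in coupling form
    (D₁ : EuclideanSpace ℝ (Fin d) → Measure Z)
    (hD₁prob : ∀ θ, IsProbabilityMeasure (D₁ θ))
    (hD₁sens : ∀ θ θ', ∃ π : Measure (Z × Z), IsCoupling π (D₁ θ) (D₁ θ') ∧
      ∫ p, dist p.1 p.2 ∂π ≤ ε * ‖θ - θ'‖)
    -- nonnegative mixture weights summing to one: `α k` is the fraction of level-`(k+1)` thinkers
    (α : ℕ → ℝ≥0) (hα : ∑' k, α k = 1)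
    -- the level-1 retraining map `S(θ) = A(D₁(θ))`
    (S : EuclideanSpace ℝ (Fin d) → EuclideanSpace ℝ (Fin d))
    (hS : ∀ θ, S θ = A (D₁ θ))
    -- the mixture distribution map `D̄(θ) = ∑_{k≥1} αₖ D_k(θ)` with `D_k(θ) = D₁(S^{k-1}(θ))`
    (Dbar : EuclideanSpace ℝ (Fin d) → Measure Z)
    (hDbar : ∀ θ, Dbar θ = Measure.sum fun k => α k • D₁ (S^[k] θ))
    -- the retraining map on the mixed population
    (T : EuclideanSpace ℝ (Fin d) → EuclideanSpace ℝ (Fin d))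
    (hT : ∀ θ, T θ = A (Dbar θ)) :
    ∃ ρ : ℝ, ρ = (∑' k : ℕ, (α k : ℝ) * (ε * β / γ) ^ (k + 1)) ∧ ρ < 1 ∧
      (∀ θ θ', ‖T θ - T θ'‖ ≤ ρ * ‖θ - θ'‖) ∧
      ∃ θstar, T θstar = θstar ∧ (∀ θ', T θ' = θ' → θ' = θstar) ∧
        ∀ (θ₀ : EuclideanSpace ℝ (Fin d)) (t : ℕ),
          ‖T^[t] θ₀ - θstar‖ ≤ ρ ^ t * ‖θ₀ - θstar‖ :=
  level_k_retraining_convergence_general β γ ε hβ hγ hε hcontr A hA D₁ hD₁prob hD₁sens α hα S hS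
    Dbar hDbar T hT
end

section
/- Let Z be a metric space with its Borel σ-algebra, let ε > 0 and c ≥ 0. Let D₁ : ℝ^d → P(Z) be ε-sensitive in coupling form, and let S : ℝ^d → ℝ^d be c-Lipschitz. Let (α_k)_{k≥1} be nonnegative weights with Σ_{k≥1} α_k = 1 and define the mixture distribution map D̄(θ) := Σ_{k≥1} α_k D₁(S^{k−1}(θ)). Then D̄ is (Σ_{k≥1} α_k c^{k−1} ε)-sensitive in coupling form: for all θ, θ' ∈ ℝ^d there exists a coupling π of D̄(θ) and D̄(θ') with ∫ dist(z, z') dπ(z, z') ≤ (Σ_{k≥1} α_k c^{k−1} ε) ‖θ − θ'‖. -/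
/-!
At every level `k`, take the coupling of `D₁(S^k θ)` and `D₁(S^k θ')` provided by the sensitivity
of `D₁`, and mix these couplings with the weights `α k`: the mixture couples `D̄(θ)` with `D̄(θ')`,
and its transport cost is the weighted sum of the level costs, each at most `ε c^k ‖θ - θ'‖`
because `S^k` is `c^k`-Lipschitz.
-/

open MeasureTheory
open scoped NNReal

namespace IsCoupling

variable {Z : Type*} [MeasurableSpace Z]

theorem smul {π : Measure (Z × Z)} {μ ν : Measure Z} (h : IsCoupling π μ ν) (w : ℝ≥0) :
    IsCoupling (w • π) (w • μ) (w • ν) :=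
  ⟨by rw [Measure.map_smul, h.1], by rw [Measure.map_smul, h.2]⟩

theorem sum {ι : Type*} {π : ι → Measure (Z × Z)} {μ ν : ι → Measure Z}
    (h : ∀ i, IsCoupling (π i) (μ i) (ν i)) :
    IsCoupling (Measure.sum π) (Measure.sum μ) (Measure.sum ν) :=
  ⟨by simp only [Measure.map_sum measurable_fst.aemeasurable, fun i => (h i).1],
   by simp only [Measure.map_sum measurable_snd.aemeasurable, fun i => (h i).2]⟩

end IsCoupling

theorem integral_sum_smul_measure_le {X ι : Type*} [MeasurableSpace X] {f : X → ℝ} (hf : 0 ≤ f)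
    {μ : ι → Measure X} {w : ι → ℝ≥0} {b : ι → ℝ} (hb : ∀ i, ∫ x, f x ∂μ i ≤ b i)
    (hwb : Summable fun i => (w i : ℝ) * b i) :
    ∫ x, f x ∂Measure.sum (fun i => w i • μ i) ≤ ∑' i, (w i : ℝ) * b i := by
  by_cases hint : Integrable f (Measure.sum fun i => w i • μ i)
  · refine hasSum_le (fun i => ?_) (hasSum_integral_measure hint) hwb.hasSum
    rw [integral_smul_nnreal_measure, NNReal.smul_def, smul_eq_mul]
    exact mul_le_mul_of_nonneg_left (hb i) (w i).coe_nonneg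
  · rw [integral_undef hint]
    exact tsum_nonneg fun i =>
      mul_nonneg (w i).coe_nonneg ((integral_nonneg hf).trans (hb i))

/-- `α k` is the weight of level-`(k+1)` thinkers: the paper's sums over `k ≥ 1` are indexed
from `0` here, so `S^{k-1}` and `c^{k-1}` become `S^[k]` and `c ^ k`. -/
theorem mixed_population_sensitivity_general
    {Z : Type*} [MetricSpace Z] [MeasurableSpace Z] {d : ℕ}
    (ε c : ℝ) (hε : 0 < ε) (hc : 0 ≤ c)
    (D₁ : EuclideanSpace ℝ (Fin d) → Measure Z)
    (hD₁sens : ∀ θ θ', ∃ π : Measure (Z × Z), IsCoupling π (D₁ θ) (D₁ θ') ∧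
      ∫ p, dist p.1 p.2 ∂π ≤ ε * ‖θ - θ'‖)
    (S : EuclideanSpace ℝ (Fin d) → EuclideanSpace ℝ (Fin d))
    (hS : ∀ θ θ', ‖S θ - S θ'‖ ≤ c * ‖θ - θ'‖)
    (α : ℕ → ℝ≥0)
    (hsum : Summable fun k : ℕ => (α k : ℝ) * c ^ k)
    (Dbar : EuclideanSpace ℝ (Fin d) → Measure Z)
    (hDbar : ∀ θ, Dbar θ = Measure.sum fun k => α k • D₁ (S^[k] θ)) :
    ∀ θ θ', ∃ π : Measure (Z × Z), IsCoupling π (Dbar θ) (Dbar θ') ∧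
      ∫ p, dist p.1 p.2 ∂π ≤ (∑' k : ℕ, (α k : ℝ) * c ^ k * ε) * ‖θ - θ'‖ := by
  intro θ θ'
  choose π hπ hπ_le using fun k => hD₁sens (S^[k] θ) (S^[k] θ')
  have hS_lip : LipschitzWith c.toNNReal S :=
    .of_dist_le' fun x y => by simpa only [dist_eq_norm] using hS x y
  have h_iterate (k : ℕ) : ‖S^[k] θ - S^[k] θ'‖ ≤ c ^ k * ‖θ - θ'‖ := by
    simpa only [dist_eq_norm, NNReal.coe_pow, Real.coe_toNNReal c hc] using
      (hS_lip.iterate k).dist_le_mul θ θ'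
  refine ⟨Measure.sum fun k => α k • π k, ?_, ?_⟩
  · rw [hDbar, hDbar]
    exact IsCoupling.sum fun k => (hπ k).smul (α k)
  calc ∫ p, dist p.1 p.2 ∂Measure.sum (fun k => α k • π k)
      ≤ ∑' k, (α k : ℝ) * (c ^ k * ε * ‖θ - θ'‖) :=
        integral_sum_smul_measure_le (fun _ => dist_nonneg)
          (fun k => (hπ_le k).trans <|
            (mul_le_mul_of_nonneg_left (h_iterate k) hε.le).trans_eq (by ring))
          (by simpa only [mul_assoc] using hsum.mul_right (ε * ‖θ - θ'‖))
    _ = (∑' k, (α k : ℝ) * c ^ k * ε) * ‖θ - θ'‖ := by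
        simp only [← tsum_mul_right, mul_assoc]

/-- **Lemma A.2 (sensitivity of the mixed population of level-`k` thinkers)**.
Here `α k` is the weight of level-`(k+1)` thinkers, for `k = 0, 1, 2, …`, so that the mixture
`D̄(θ) = ∑_{k≥1} αₖ D₁(S^{k-1}(θ))` is `Measure.sum fun k => α k • D₁ (S^[k] θ)`, and
`∑_{k≥1} αₖ c^{k-1} ε = ∑' (k : ℕ), α k * c^k * ε`. If `D₁` is `ε`-sensitive in coupling form
and `S` is `c`-Lipschitz then `D̄` is `(∑_{k≥1} αₖ c^{k-1} ε)`-sensitive in coupling form. -/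
theorem mixed_population_sensitivity
    {Z : Type*} [MetricSpace Z] [MeasurableSpace Z] [BorelSpace Z] {d : ℕ}
    (ε c : ℝ) (hε : 0 < ε) (hc : 0 ≤ c)
    (D₁ : EuclideanSpace ℝ (Fin d) → Measure Z)
    (hD₁prob : ∀ θ, IsProbabilityMeasure (D₁ θ))
    (hD₁sens : ∀ θ θ', ∃ π : Measure (Z × Z), IsCoupling π (D₁ θ) (D₁ θ') ∧
      ∫ p, dist p.1 p.2 ∂π ≤ ε * ‖θ - θ'‖)
    (S : EuclideanSpace ℝ (Fin d) → EuclideanSpace ℝ (Fin d))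
    (hS : ∀ θ θ', ‖S θ - S θ'‖ ≤ c * ‖θ - θ'‖)
    (α : ℕ → ℝ≥0) (hα : ∑' k, α k = 1)
    (hsum : Summable fun k : ℕ => (α k : ℝ) * c ^ k)
    (Dbar : EuclideanSpace ℝ (Fin d) → Measure Z)
    (hDbar : ∀ θ, Dbar θ = Measure.sum fun k => α k • D₁ (S^[k] θ)) :
    ∀ θ θ', ∃ π : Measure (Z × Z), IsCoupling π (Dbar θ) (Dbar θ') ∧
      ∫ p, dist p.1 p.2 ∂π ≤ (∑' k : ℕ, (α k : ℝ) * c ^ k * ε) * ‖θ - θ'‖ :=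
  mixed_population_sensitivity_general ε c hε hc D₁ hD₁sens S hS α hsum Dbar hDbar
end

section
/- Let Z be a measurable space, Θ an arbitrary set, ℓ : Z × Θ → ℝ, c > 0, and define the population utility u(z, θ) := c · ℓ(z, θ). Let S be a set of probability measures on Z (the feasible induced data distributions) such that ℓ(·, θ) is integrable with respect to every D ∈ S for every θ ∈ Θ. Suppose (D*, θ*) with D* ∈ S and θ* ∈ Θ is a performatively stable point: (i) ∫ ℓ(z, θ*) dD*(z) ≤ ∫ ℓ(z, θ) dD*(z) for all θ ∈ Θ (the learner best-responds to D*), and (ii) ∫ u(z, θ*) dD(z) ≤ ∫ u(z, θ*) dD*(z) for all D ∈ S (the population best-responds to θ*). For each D ∈ S let θ_D ∈ Θ satisfy ∫ ℓ(z, θ_D) dD(z) ≤ ∫ ℓ(z, θ) dD(z) for all θ ∈ Θ. Then for every D ∈ S, ∫ u(z, θ_D) dD(z) ≤ ∫ u(z, θ*) dD*(z); that is, the benefit of coordination is zero: no collective strategy achieves a higher population utility at the induced risk minimizer than the selfish equilibrium. -/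
open MeasureTheory

theorem integral_const_mul_le_integral_const_mul {Z : Type*} [MeasurableSpace Z] {μ : Measure Z}
    {f g : Z → ℝ} {c : ℝ} (hc : 0 ≤ c) (hfg : ∫ z, f z ∂μ ≤ ∫ z, g z ∂μ) :
    ∫ z, c * f z ∂μ ≤ ∫ z, c * g z ∂μ := by
  simpa only [integral_const_mul] using mul_le_mul_of_nonneg_left hfg hc

theorem zero_benefit_of_coordination_zero_sum_general
    {Z : Type*} [MeasurableSpace Z] {Θ : Type*}
    (ℓ : Z → Θ → ℝ) (c : ℝ) (hc : 0 < c)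
    (u : Z → Θ → ℝ) (hu : ∀ z θ, u z θ = c * ℓ z θ)
    -- the set of feasible induced data distributions
    (S : Set (Measure Z))
    -- a performatively stable point `(D*, θ*)`
    (Dstar : Measure Z) (θstar : Θ)
    -- (ii) the population best-responds to `θ*`
    (hpop : ∀ D ∈ S, ∫ z, u z θstar ∂D ≤ ∫ z, u z θstar ∂Dstar)
    -- for each `D ∈ S`, `θbr D` is a risk minimizer of the learner's expected loss over `D`
    (θbr : Measure Z → Θ)
    (hθbr : ∀ D ∈ S, ∀ θ : Θ, ∫ z, ℓ z (θbr D) ∂D ≤ ∫ z, ℓ z θ ∂D) :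
    ∀ D ∈ S, ∫ z, u z (θbr D) ∂D ≤ ∫ z, u z θstar ∂Dstar := by
  intro D hD
  simp only [hu] at hpop ⊢
  -- in the zero-sum game the learner's best response is the population's worst model
  exact (integral_const_mul_le_integral_const_mul hc.le (hθbr D hD θstar)).trans (hpop D hD)

/-- **Proposition 4.2, adversarial case (`u = c·ℓ`, `c > 0`): the benefit of coordination is
zero.** If the population utility is a positive multiple of the learner's loss, then at a
performatively stable point `(D*, θ*)` no feasible induced distribution `D ∈ S` achieves a
higher population utility at the induced risk minimizer `θ_D` than the selfish equilibrium. -/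
theorem zero_benefit_of_coordination_zero_sum
    {Z : Type*} [MeasurableSpace Z] {Θ : Type*}
    (ℓ : Z → Θ → ℝ) (c : ℝ) (hc : 0 < c)
    (u : Z → Θ → ℝ) (hu : ∀ z θ, u z θ = c * ℓ z θ)
    -- the set of feasible induced data distributions
    (S : Set (Measure Z)) (hSprob : ∀ D ∈ S, IsProbabilityMeasure D)
    (hint : ∀ D ∈ S, ∀ θ : Θ, Integrable (fun z => ℓ z θ) D)
    -- a performatively stable point `(D*, θ*)`
    (Dstar : Measure Z) (hDstar : Dstar ∈ S) (θstar : Θ)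
    -- (i) the learner best-responds to `D*`
    (hlearner : ∀ θ : Θ, ∫ z, ℓ z θstar ∂Dstar ≤ ∫ z, ℓ z θ ∂Dstar)
    -- (ii) the population best-responds to `θ*`
    (hpop : ∀ D ∈ S, ∫ z, u z θstar ∂D ≤ ∫ z, u z θstar ∂Dstar)
    -- for each `D ∈ S`, `θbr D` is a risk minimizer of the learner's expected loss over `D`
    (θbr : Measure Z → Θ)
    (hθbr : ∀ D ∈ S, ∀ θ : Θ, ∫ z, ℓ z (θbr D) ∂D ≤ ∫ z, ℓ z θ ∂D) :
    ∀ D ∈ S, ∫ z, u z (θbr D) ∂D ≤ ∫ z, u z θstar ∂Dstar :=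
  zero_benefit_of_coordination_zero_sum_general ℓ c hc u hu S Dstar θstar hpop θbr hθbr
end

section
/- Let g : ℝ^m × ℝ^d → ℝ be twice continuously differentiable, let c ≠ 0, and set f := c · g. Let θ̂ : ℝ^m → ℝ^d be differentiable with ∇_θ g(η, θ̂(η)) = 0 for all η, and suppose H(η) := ∇²_{θθ} g(η, θ̂(η)) is invertible for all η. Define V(η) := f(η, θ̂(η)), and suppose V is differentiable with gradient ∇V and satisfies the first-order γ-strong concavity inequality V(y) ≤ V(x) + ⟨∇V(x), y − x⟩ − (γ/2)‖y − x‖² for all x, y, for some γ > 0. Let η* satisfy ∇_η f(η*, θ̂(η*)) = 0. Then V(η) ≤ V(η*) for all η ∈ ℝ^m, i.e., V attains its maximum at η*. In particular, if η♯ maximizes V then V(η♯) = V(η*), i.e., the benefit of coordination is zero when the population utility is a nonzero scalar multiple of the learner's loss. -/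
open scoped RealInnerProductSpace

open InnerProductSpace in
lemma fderiv_eq_toDual_gradient' {E : Type*} [NormedAddCommGroup E] [InnerProductSpace ℝ E]
    [CompleteSpace E] (h : E → ℝ) (x : E) :
    fderiv ℝ h x = (toDual ℝ E) (gradient h x) := by
  rw [gradient, (toDual ℝ E).apply_symm_apply]

/-- **Proposition 4.2 (parametrized form): `u = c·ℓ` implies zero benefit of coordination.**
If the equilibrium population utility `V(η) = f(η, θ̂(η))` is strongly concave, `f = c·g` with
`c ≠ 0`, the learner best-responds (`∇_θ g(η, θ̂(η)) = 0`) with invertible Hessian, and `η*`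
satisfies the selfish first-order condition `∇_η f(η*, θ̂(η*)) = 0`, then `η*` is a global
maximizer of `V`; in particular any maximizer `η♯` of `V` has `V(η♯) = V(η*)`. -/
theorem zero_benefit_of_coordination_scalar_multiple
    {m d : ℕ}
    (g : EuclideanSpace ℝ (Fin m) → EuclideanSpace ℝ (Fin d) → ℝ)
    (hg : ContDiff ℝ 2 fun p : EuclideanSpace ℝ (Fin m) × EuclideanSpace ℝ (Fin d) => g p.1 p.2)
    (c : ℝ) (hc : c ≠ 0)
    (f : EuclideanSpace ℝ (Fin m) → EuclideanSpace ℝ (Fin d) → ℝ)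
    (hf : ∀ η θ, f η θ = c * g η θ)
    (θhat : EuclideanSpace ℝ (Fin m) → EuclideanSpace ℝ (Fin d))
    (hθhat : Differentiable ℝ θhat)
    -- the learner best-responds: `∇_θ g(η, θ̂(η)) = 0`
    (hcrit : ∀ η, gradient (g η) (θhat η) = 0)
    -- the Hessian `H(η) = ∇²_{θθ} g(η, θ̂(η))` is invertible
    (hHinv : ∀ η, ∃ Hinv : EuclideanSpace ℝ (Fin d) →L[ℝ] EuclideanSpace ℝ (Fin d),
      Hinv.comp (fderiv ℝ (gradient (g η)) (θhat η)) =
        ContinuousLinearMap.id ℝ (EuclideanSpace ℝ (Fin d)) ∧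
      (fderiv ℝ (gradient (g η)) (θhat η)).comp Hinv =
        ContinuousLinearMap.id ℝ (EuclideanSpace ℝ (Fin d)))
    -- the equilibrium utility `V(η) = f(η, θ̂(η))`, differentiable and `γ`-strongly concave
    (V : EuclideanSpace ℝ (Fin m) → ℝ) (hV : ∀ η, V η = f η (θhat η))
    (hVdiff : Differentiable ℝ V)
    (γ : ℝ) (hγ : 0 < γ)
    (hconc : ∀ x y, V y ≤ V x + ⟪gradient V x, y - x⟫ - γ / 2 * ‖y - x‖ ^ 2)
    -- the selfish stable strategy: `∇_η f(η*, θ̂(η*)) = 0`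
    (ηstar : EuclideanSpace ℝ (Fin m))
    (hηstar : gradient (fun η => f η (θhat ηstar)) ηstar = 0) :
    (∀ η, V η ≤ V ηstar) ∧
    ∀ ηsharp : EuclideanSpace ℝ (Fin m), (∀ η, V η ≤ V ηsharp) → V ηsharp = V ηstar := by
  set θs := θhat ηstar with hθs
  set F : EuclideanSpace ℝ (Fin m) × EuclideanSpace ℝ (Fin d) → ℝ := fun p => f p.1 p.2 with hF
  have hFeq : F = fun p => c * g p.1 p.2 := by funext p; simp [hF, hf]
  have hFdiff : Differentiable ℝ F := by
    rw [hFeq]; exact (hg.differentiable two_ne_zero).const_mul c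
  -- partial derivative in η is zero
  have hpart1 : fderiv ℝ (fun x => F (x, θs)) ηstar = 0 := by
    have h1 : (fun x => F (x, θs)) = fun x => f x (θhat ηstar) := by funext x; simp [hF, hθs]
    rw [h1, fderiv_eq_toDual_gradient', hηstar, map_zero]
  -- partial derivative in θ is zero
  have hgdiff : Differentiable ℝ (g ηstar) :=
    (hg.differentiable two_ne_zero).comp ((differentiable_const ηstar).prodMk differentiable_id)
  have hpart2 : fderiv ℝ (fun y => F (ηstar, y)) θs = 0 := by
    have h2 : (fun y => F (ηstar, y)) = fun y => c * g ηstar y := by funext y; simp [hF, hf]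
    rw [h2, fderiv_const_mul (hgdiff θs), fderiv_eq_toDual_gradient', hcrit, map_zero, smul_zero]
  -- total derivative of F at (ηstar, θs) is zero
  have hDF : fderiv ℝ F (ηstar, θs) = 0 := by
    have hl : (fderiv ℝ F (ηstar, θs)).comp
        (ContinuousLinearMap.inl ℝ (EuclideanSpace ℝ (Fin m)) (EuclideanSpace ℝ (Fin d))) = 0 := by
      rw [← ((hFdiff (ηstar, θs)).hasFDerivAt.comp ηstar
        (hasFDerivAt_prodMk_left ηstar θs)).fderiv]
      exact hpart1
    have hr : (fderiv ℝ F (ηstar, θs)).comp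
        (ContinuousLinearMap.inr ℝ (EuclideanSpace ℝ (Fin m)) (EuclideanSpace ℝ (Fin d))) = 0 := by
      rw [← ((hFdiff (ηstar, θs)).hasFDerivAt.comp θs
        (hasFDerivAt_prodMk_right ηstar θs)).fderiv]
      exact hpart2
    ext u
    · exact congrFun (congrArg DFunLike.coe hl) u
    · exact congrFun (congrArg DFunLike.coe hr) u
  -- derivative of V at ηstar is zero
  have hVeq : V = fun η => F (η, θhat η) := by funext η; simp [hF, hV]
  have hDV : fderiv ℝ V ηstar = 0 := by
    have hcomp : HasFDerivAt V
        ((fderiv ℝ F (ηstar, θs)).comp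
          ((ContinuousLinearMap.id ℝ _).prod (fderiv ℝ θhat ηstar))) ηstar := by
      rw [hVeq]
      exact (hFdiff (ηstar, θs)).hasFDerivAt.comp ηstar
        ((hasFDerivAt_id ηstar).prodMk (hθhat ηstar).hasFDerivAt)
    rw [hcomp.fderiv, hDF, ContinuousLinearMap.zero_comp]
  have hgradV : gradient V ηstar = 0 := by
    rw [gradient, hDV, map_zero]
  have hmax : ∀ η, V η ≤ V ηstar := by
    intro η
    have := hconc ηstar η
    rw [hgradV] at this
    have hn : (0:ℝ) ≤ γ / 2 * ‖η - ηstar‖ ^ 2 := by positivity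
    simp only [inner_zero_left] at this
    linarith
  exact ⟨hmax, fun ηsharp hsharp => le_antisymm (hmax ηsharp) (hsharp ηstar)⟩
end

section
/- Let f : ℝ^m × ℝ^d → ℝ be continuously differentiable and g : ℝ^m × ℝ^d → ℝ be twice continuously differentiable. Let θ̂ : ℝ^m → ℝ^d be differentiable with ∇_θ g(η, θ̂(η)) = 0 for all η, and suppose H(η) := ∇²_{θθ} g(η, θ̂(η)) is invertible for all η. Define V(η) := f(η, θ̂(η)) and suppose V satisfies the first-order γ-strong concavity inequality V(y) ≤ V(x) + ⟨∇V(x), y − x⟩ − (γ/2)‖y − x‖² for all x, y, for some γ > 0. Let η* satisfy ∇_η f(η*, θ̂(η*)) = 0 and set θ* := θ̂(η*). Then for every η ∈ ℝ^m (in particular for any maximizer η♯ of V), 0 ≤ V(η♯) − V(η*) and V(η) − V(η*) ≤ (1/(2γ)) ‖∇²_{ηθ} g(η*, θ*) · H(η*)^{-1} · ∇_θ f(η*, θ*)‖², where ∇²_{ηθ} g is the m × d matrix of mixed second partial derivatives. -/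
/-!
Differentiating the first-order condition `∇_θ g(η, θ̂(η)) = 0` along `η` gives the implicit
derivative `Dθ̂(η*) = -H⁻¹ M`, so the envelope formula for `V(η) = f(η, θ̂(η))` at the selfish
strategy, where the direct term `∇_η f` vanishes, reads `∇V(η*) = -Mᵀ H⁻¹ ∇_θ f(η*, θ*)`
(the Hessian `H` is symmetric, hence so is `H⁻¹`). Strong concavity then bounds
`V(η) - V(η*)` by the maximum of `⟪∇V(η*), u⟫ - γ/2 ‖u‖²` over `u`, which is `‖∇V(η*)‖² / (2γ)`.
-/

open scoped RealInnerProductSpace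
open ContinuousLinearMap InnerProductSpace Filter Topology

section PartialDerivatives

variable {𝕜 E F G : Type*} [NontriviallyNormedField 𝕜]
  [NormedAddCommGroup E] [NormedSpace 𝕜 E] [NormedAddCommGroup F] [NormedSpace 𝕜 F]
  [NormedAddCommGroup G] [NormedSpace 𝕜 G]

theorem fderiv_partial_left {φ : E × F → G} {x : E} {y : F}
    (hφ : DifferentiableAt 𝕜 φ (x, y)) :
    fderiv 𝕜 (fun x' => φ (x', y)) x = (fderiv 𝕜 φ (x, y)).comp (inl 𝕜 E F) :=
  (hφ.hasFDerivAt.comp x (hasFDerivAt_prodMk_left x y)).fderiv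

theorem fderiv_partial_right {φ : E × F → G} {x : E} {y : F}
    (hφ : DifferentiableAt 𝕜 φ (x, y)) :
    fderiv 𝕜 (fun y' => φ (x, y')) y = (fderiv 𝕜 φ (x, y)).comp (inr 𝕜 E F) :=
  (hφ.hasFDerivAt.comp y (hasFDerivAt_prodMk_right x y)).fderiv

theorem hasFDerivAt_apply_graph {φ : E × F → G} {θ : E → F} {x : E}
    (hφ : DifferentiableAt 𝕜 φ (x, θ x)) (hθ : DifferentiableAt 𝕜 θ x) :
    HasFDerivAt (fun η => φ (η, θ η))
      (fderiv 𝕜 (fun η => φ (η, θ x)) x +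
        (fderiv 𝕜 (fun y => φ (x, y)) (θ x)).comp (fderiv 𝕜 θ x)) x := by
  rw [fderiv_partial_left hφ, fderiv_partial_right hφ]
  refine (hφ.hasFDerivAt.comp x ((hasFDerivAt_id x).prodMk hθ.hasFDerivAt)).congr_fderiv ?_
  ext v
  simp [← map_add]

theorem fderiv_eq_neg_comp_of_apply_graph_eq_zero {φ : E × F → G} {θ : E → F} {x : E}
    (hφ : DifferentiableAt 𝕜 φ (x, θ x)) (hθ : DifferentiableAt 𝕜 θ x)
    (hzero : (fun η => φ (η, θ η)) =ᶠ[𝓝 x] 0) {L : G →L[𝕜] F}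
    (hL : L.comp (fderiv 𝕜 (fun y => φ (x, y)) (θ x)) = ContinuousLinearMap.id 𝕜 F) :
    fderiv 𝕜 θ x = -L.comp (fderiv 𝕜 (fun η => φ (η, θ x)) x) := by
  have hsum := (hasFDerivAt_apply_graph hφ hθ).fderiv.symm.trans hzero.fderiv_eq
  rw [fderiv_zero, Pi.zero_apply, add_eq_zero_iff_eq_neg'] at hsum
  rw [eq_neg_iff_add_eq_zero, ← ContinuousLinearMap.id_comp (fderiv 𝕜 θ x), ← hL,
    comp_assoc, ← comp_add, hsum, neg_add_cancel, comp_zero]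

end PartialDerivatives

theorem sub_le_of_le_add_inner_sub_sq {E : Type*} [NormedAddCommGroup E] [InnerProductSpace ℝ E]
    {a b γ : ℝ} {g u : E} (hγ : 0 < γ)
    (h : b ≤ a + ⟪g, u⟫ - γ / 2 * ‖u‖ ^ 2) :
    b - a ≤ 1 / (2 * γ) * ‖g‖ ^ 2 := by
  have hcs := real_inner_le_norm g u
  rw [mul_comm, mul_one_div, le_div_iff₀ (by positivity)]
  nlinarith [sq_nonneg (‖g‖ - γ * ‖u‖)]

theorem IsSelfAdjoint.of_mul_eq_one {R : Type*} [Monoid R] [StarMul R] {a b : R}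
    (ha : IsSelfAdjoint a) (hba : b * a = 1) (hab : a * b = 1) : IsSelfAdjoint b :=
  letI : Invertible a := ⟨b, hba, hab⟩
  ha.invOf

section Gradients

variable {E F : Type*} [NormedAddCommGroup E] [InnerProductSpace ℝ E]
  [NormedAddCommGroup F] [InnerProductSpace ℝ F] [CompleteSpace F]

theorem gradient_apply_graph [CompleteSpace E] {φ : E × F → ℝ} {θ : E → F} {x : E}
    (hφ : DifferentiableAt ℝ φ (x, θ x)) (hθ : DifferentiableAt ℝ θ x) :
    gradient (fun η => φ (η, θ η)) x =
      gradient (fun η => φ (η, θ x)) x +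
        adjoint (fderiv ℝ θ x) (gradient (fun y => φ (x, y)) (θ x)) := by
  refine ext_inner_right ℝ fun v => ?_
  rw [inner_add_left, adjoint_inner_left]
  simp only [gradient, toDual_symm_apply, (hasFDerivAt_apply_graph hφ hθ).fderiv,
    add_apply, ContinuousLinearMap.comp_apply]

theorem contDiff_partial_gradient {φ : E × F → ℝ} {n : WithTop ℕ∞}
    (hφ : ContDiff ℝ (n + 1) φ) :
    ContDiff ℝ n fun p : E × F => gradient (fun y => φ (p.1, y)) p.2 := by
  have hdiff : Differentiable ℝ φ := hφ.differentiable (by simp)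
  have hpartial : (fun p : E × F => gradient (fun y => φ (p.1, y)) p.2) =
      fun p => (toDual ℝ F).symm ((fderiv ℝ φ p).comp (inr ℝ E F)) := by
    funext p
    rw [gradient, fderiv_partial_right (hdiff p)]
  rw [hpartial]
  exact ((toDual ℝ F).symm.toContinuousLinearEquiv.toContinuousLinearMap.comp
    ((compL ℝ F (E × F) ℝ).flip (inr ℝ E F))).contDiff.comp (hφ.fderiv_right le_rfl)

theorem isSelfAdjoint_fderiv_gradient {ψ : F → ℝ} {x : F} (hψ : ContDiffAt ℝ 2 ψ x) :
    IsSelfAdjoint (fderiv ℝ (gradient ψ) x) := by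
  have hdiff : DifferentiableAt ℝ (fderiv ℝ ψ) x :=
    (hψ.fderiv_right (m := 1) (by norm_num)).differentiableAt (by simp)
  have hhess : fderiv ℝ (gradient ψ) x =
      (toDual ℝ F).symm.toContinuousLinearEquiv.toContinuousLinearMap.comp
        (fderiv ℝ (fderiv ℝ ψ) x) :=
    ((toDual ℝ F).symm.toContinuousLinearEquiv.toContinuousLinearMap.hasFDerivAt.comp x
      hdiff.hasFDerivAt).fderiv
  rw [isSelfAdjoint_iff_isSymmetric, hhess]
  intro u v
  simp only [coe_coe, ContinuousLinearMap.comp_apply, ContinuousLinearEquiv.coe_coe,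
    LinearIsometryEquiv.coe_toContinuousLinearEquiv]
  rw [← real_inner_comm u, toDual_symm_apply, toDual_symm_apply]
  exact hψ.isSymmSndFDerivAt (by simp) u v

end Gradients

/-- **Theorem B (generalized bound on the benefit of coordination), parametrized form.**
With the learner best-responding via `θ̂` with invertible Hessian
`H = ∇²_{θθ} g(η*, θ*)` at the selfish stable strategy `η*` (where
`∇_η f(η*, θ̂(η*)) = 0` and `θ* = θ̂(η*)`), and the equilibrium utility `V(η) = f(η, θ̂(η))`
`γ`-strongly concave, the benefit of coordination satisfies
`0 ≤ V(η♯) − V(η*) ≤ (1/(2γ)) ‖∇²_{ηθ} g(η*, θ*) H⁻¹ ∇_θ f(η*, θ*)‖²`,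
where `M = ∇²_{θη} g(η*, θ*)` and `∇²_{ηθ} g(η*, θ*)` is its adjoint. -/
theorem benefit_of_coordination_bound_general
    {m d : ℕ}
    (f g : EuclideanSpace ℝ (Fin m) → EuclideanSpace ℝ (Fin d) → ℝ)
    (hf : ContDiff ℝ 1 fun p : EuclideanSpace ℝ (Fin m) × EuclideanSpace ℝ (Fin d) => f p.1 p.2)
    (hg : ContDiff ℝ 2 fun p : EuclideanSpace ℝ (Fin m) × EuclideanSpace ℝ (Fin d) => g p.1 p.2)
    (θhat : EuclideanSpace ℝ (Fin m) → EuclideanSpace ℝ (Fin d))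
    (hθhat : Differentiable ℝ θhat)
    -- the learner best-responds: `∇_θ g(η, θ̂(η)) = 0`
    (hcrit : ∀ η, gradient (g η) (θhat η) = 0)
    -- the selfish stable strategy `η*`, with `θ* = θ̂(η*)`
    (ηstar : EuclideanSpace ℝ (Fin m))
    (hηstar : gradient (fun η => f η (θhat ηstar)) ηstar = 0)
    -- the Hessian `H = ∇²_{θθ} g(η*, θ*)` and its inverse
    (H : EuclideanSpace ℝ (Fin d) →L[ℝ] EuclideanSpace ℝ (Fin d))
    (hH : H = fderiv ℝ (gradient (g ηstar)) (θhat ηstar))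
    (Hinv : EuclideanSpace ℝ (Fin d) →L[ℝ] EuclideanSpace ℝ (Fin d))
    (hHinv : Hinv.comp H = ContinuousLinearMap.id ℝ (EuclideanSpace ℝ (Fin d)) ∧
      H.comp Hinv = ContinuousLinearMap.id ℝ (EuclideanSpace ℝ (Fin d)))
    -- the mixed second derivative block `M = ∇²_{θη} g(η*, θ*)`
    (M : EuclideanSpace ℝ (Fin m) →L[ℝ] EuclideanSpace ℝ (Fin d))
    (hM : M = fderiv ℝ (fun η' => gradient (g η') (θhat ηstar)) ηstar)
    -- the equilibrium utility `V(η) = f(η, θ̂(η))`, `γ`-strongly concave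
    (V : EuclideanSpace ℝ (Fin m) → ℝ) (hV : ∀ η, V η = f η (θhat η))
    (γ : ℝ) (hγ : 0 < γ)
    (hconc : ∀ x y, V y ≤ V x + ⟪gradient V x, y - x⟫ - γ / 2 * ‖y - x‖ ^ 2) :
    -- the benefit of coordination is nonnegative ...
    (∀ ηsharp : EuclideanSpace ℝ (Fin m), (∀ η, V η ≤ V ηsharp) → 0 ≤ V ηsharp - V ηstar) ∧
    -- ... and bounded by `(1/(2γ)) ‖∇²_{ηθ} g(η*, θ*) H⁻¹ ∇_θ f(η*, θ*)‖²`
    ∀ η, V η - V ηstar ≤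
      1 / (2 * γ) *
        ‖ContinuousLinearMap.adjoint M (Hinv (gradient (f ηstar) (θhat ηstar)))‖ ^ 2 := by
  refine ⟨fun ηsharp hmax => sub_nonneg.2 (hmax ηstar), fun η => ?_⟩
  have hgradθ := contDiff_partial_gradient (n := 1) hg
  have hDθ : fderiv ℝ θhat ηstar = -Hinv.comp M := by
    rw [hM]
    refine fderiv_eq_neg_comp_of_apply_graph_eq_zero (hgradθ.differentiable one_ne_zero _)
      (hθhat ηstar) (.of_forall hcrit) ?_
    rw [← hH, hHinv.1]
  have hHinv_sa : IsSelfAdjoint Hinv :=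
    (hH ▸ isSelfAdjoint_fderiv_gradient
      (hg.comp (contDiff_const.prodMk contDiff_id)).contDiffAt).of_mul_eq_one hHinv.1 hHinv.2
  have hgradV : gradient V ηstar =
      -ContinuousLinearMap.adjoint M (Hinv (gradient (f ηstar) (θhat ηstar))) := by
    rw [funext hV, gradient_apply_graph (hf.differentiable one_ne_zero _) (hθhat ηstar)]
    simp only [hηstar, hDθ, zero_add, map_neg, adjoint_comp, hHinv_sa.adjoint_eq, neg_apply,
      ContinuousLinearMap.comp_apply]
  simpa [hgradV] using sub_le_of_le_add_inner_sub_sq hγ (hconc ηstar η)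
end

section
/- Let Z be a measurable space, D_h and D_0 probability measures on Z, and ℓ, u : Z × ℝ^d → ℝ. Suppose the maps L^h(θ) := ∫ ℓ(z, θ) dD_h(z) and L^0(θ) := ∫ ℓ(z, θ) dD_0(z) are twice continuously differentiable with ∇L^h(θ) = ∫ ∇_θ ℓ(z, θ) dD_h(z) and ∇L^0(θ) = ∫ ∇_θ ℓ(z, θ) dD_0(z), and that Ũ(θ) := ∫ u(z, θ) dD_h(z) is continuously differentiable with ∇Ũ(θ) = ∫ ∇_θ u(z, θ) dD_h(z). Let θ̂ : (0,1) → ℝ^d be differentiable and satisfy the equilibrium first-order condition α ∇L^h(θ̂(α)) + (1−α) ∇L^0(θ̂(α)) = 0 for all α ∈ (0,1), and suppose H(α) := α ∇²L^h(θ̂(α)) + (1−α) ∇²L^0(θ̂(α)) is invertible. Then U_α := Ũ(θ̂(α)) is differentiable with U_α' = −(1/(1−α)) ⟨∫ ∇_θ u(z, θ̂(α)) dD_h(z), H(α)^{-1} ∫ ∇_θ ℓ(z, θ̂(α)) dD_h(z)⟩. Consequently, U_α' > 0 if and only if Ψ(α) := ⟨∫ ∇_θ u(z, θ̂(α)) dD_h(z),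 H(α)^{-1} ∫ ∇_θ ℓ(z, θ̂(α)) dD_h(z)⟩ < 0. -/
/-!
Differentiating the first-order condition `α ∇L^h(θ̂ α) + (1 - α) ∇L^0(θ̂ α) = 0` in `α` gives
`∇L^h - ∇L^0 + H(α) θ̂'(α) = 0`, and the condition itself turns `∇L^h - ∇L^0` into
`∇L^h / (1 - α)`. Hence `θ̂'(α) = -(1 / (1 - α)) H(α)⁻¹ ∇L^h`, and the chain rule gives
`U_α' = ⟪∇Ũ, θ̂'(α)⟫ = -(1 / (1 - α)) Ψ(α)`; the sign statement follows since `1 - α > 0`.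
-/

open MeasureTheory Filter Topology InnerProductSpace
open scoped RealInnerProductSpace

section Gradient

variable {E : Type*} [NormedAddCommGroup E] [InnerProductSpace ℝ E] [CompleteSpace E]

theorem ContDiff.differentiable_gradient {f : E → ℝ} (hf : ContDiff ℝ 2 f) :
    Differentiable ℝ (gradient f) :=
  (toDual ℝ E).symm.differentiable.comp
    ((hf.fderiv_right (by norm_num)).differentiable one_ne_zero)

theorem HasGradientAt.comp_hasDerivAt {f : E → ℝ} {f' : E} {γ : ℝ → E} {γ' : E} {t : ℝ}
    (hf : HasGradientAt f f' (γ t)) (hγ : HasDerivAt γ γ' t) :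
    HasDerivAt (f ∘ γ) ⟪f', γ'⟫ t := by
  simpa using hf.hasFDerivAt.comp_hasDerivAt t hγ

end Gradient

section Mixture

variable {E F : Type*} [NormedAddCommGroup E] [NormedSpace ℝ E]
  [NormedAddCommGroup F] [NormedSpace ℝ F]
  {G₁ G₀ : E → F} {A B : E →L[ℝ] F} {θ : ℝ → E} {v : E} {α : ℝ}

theorem HasFDerivAt.hasDerivAt_mixture_comp (h₁ : HasFDerivAt G₁ A (θ α))
    (h₀ : HasFDerivAt G₀ B (θ α)) (hθ : HasDerivAt θ v α) :
    HasDerivAt (fun a => a • G₁ (θ a) + (1 - a) • G₀ (θ a))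
      (G₁ (θ α) - G₀ (θ α) + (α • A + (1 - α) • B) v) α := by
  convert ((hasDerivAt_id' α).fun_smul (h₁.comp_hasDerivAt α hθ)).fun_add
    (((hasDerivAt_id' α).const_sub 1).fun_smul (h₀.comp_hasDerivAt α hθ)) using 1
  · rfl
  · simp only [add_apply, smul_apply, Function.comp_apply]
    module

theorem mixture_fderiv_apply_eq_of_eventually_eq_zero (h₁ : HasFDerivAt G₁ A (θ α))
    (h₀ : HasFDerivAt G₀ B (θ α)) (hθ : HasDerivAt θ v α)
    (hzero : ∀ᶠ a in 𝓝 α, a • G₁ (θ a) + (1 - a) • G₀ (θ a) = 0) (hα : 1 - α ≠ 0) :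
    (α • A + (1 - α) • B) v = -(1 / (1 - α)) • G₁ (θ α) := by
  have hderiv : G₁ (θ α) - G₀ (θ α) + (α • A + (1 - α) • B) v = 0 :=
    (h₁.hasDerivAt_mixture_comp h₀ hθ).unique
      ((hasDerivAt_const α 0).congr_of_eventuallyEq hzero)
  have hfoc : α • G₁ (θ α) + (1 - α) • G₀ (θ α) = 0 := hzero.self_of_nhds
  apply smul_right_injective F hα
  simp only [smul_smul, mul_neg, mul_one_div_cancel hα]
  linear_combination (norm := module) (1 - α) • hderiv + hfoc

end Mixture

theorem benefit_of_scaling_up_general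
    {Z : Type*} [MeasurableSpace Z] {d : ℕ}
    (Dh : Measure Z)
    (ℓ u : Z → EuclideanSpace ℝ (Fin d) → ℝ)
    -- `L^h(θ) = ∫ ℓ(z, θ) dDh`, twice continuously differentiable, gradient interchange
    (Lh : EuclideanSpace ℝ (Fin d) → ℝ)
    (hLhC : ContDiff ℝ 2 Lh)
    (hLhgrad : ∀ θ, gradient Lh θ = ∫ z, gradient (ℓ z) θ ∂Dh)
    -- `L^0(θ) = ∫ ℓ(z, θ) dD0`, twice continuously differentiable, gradient interchange
    (L0 : EuclideanSpace ℝ (Fin d) → ℝ)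
    (hL0C : ContDiff ℝ 2 L0)
    -- `Ũ(θ) = ∫ u(z, θ) dDh`, continuously differentiable, gradient interchange
    (Ut : EuclideanSpace ℝ (Fin d) → ℝ)
    (hUtC : ContDiff ℝ 1 Ut)
    (hUtgrad : ∀ θ, gradient Ut θ = ∫ z, gradient (u z) θ ∂Dh)
    -- the equilibrium model `θ̂(α)` on `(0,1)`: differentiable and first-order condition
    (θhat : ℝ → EuclideanSpace ℝ (Fin d))
    (hθhat : ∀ α ∈ Set.Ioo (0 : ℝ) 1, DifferentiableAt ℝ θhat α)
    (heq : ∀ α ∈ Set.Ioo (0 : ℝ) 1,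
      α • gradient Lh (θhat α) + (1 - α) • gradient L0 (θhat α) = 0)
    -- the mixture Hessian `H(α) = α ∇²L^h(θ̂(α)) + (1−α) ∇²L^0(θ̂(α))` is invertible
    (Hinv : ℝ → EuclideanSpace ℝ (Fin d) →L[ℝ] EuclideanSpace ℝ (Fin d))
    (hHinv : ∀ α ∈ Set.Ioo (0 : ℝ) 1,
      (Hinv α).comp
          (α • fderiv ℝ (gradient Lh) (θhat α) + (1 - α) • fderiv ℝ (gradient L0) (θhat α)) =
        ContinuousLinearMap.id ℝ (EuclideanSpace ℝ (Fin d)) ∧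
      (α • fderiv ℝ (gradient Lh) (θhat α) +
          (1 - α) • fderiv ℝ (gradient L0) (θhat α)).comp (Hinv α) =
        ContinuousLinearMap.id ℝ (EuclideanSpace ℝ (Fin d))) :
    ∀ α ∈ Set.Ioo (0 : ℝ) 1,
      -- `U_α` is differentiable with the stated derivative ...
      HasDerivAt (fun a => Ut (θhat a))
        (-(1 / (1 - α)) *
          ⟪∫ z, gradient (u z) (θhat α) ∂Dh, Hinv α (∫ z, gradient (ℓ z) (θhat α) ∂Dh)⟫) α ∧
      -- ... and consequently `U_α' > 0` if and only if `Ψ(α) < 0`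
      (0 < deriv (fun a => Ut (θhat a)) α ↔
        ⟪∫ z, gradient (u z) (θhat α) ∂Dh, Hinv α (∫ z, gradient (ℓ z) (θhat α) ∂Dh)⟫ < 0) := by
  intro α hα
  have hα1 : 0 < 1 - α := sub_pos.2 hα.2
  have hc : 0 < 1 / (1 - α) := one_div_pos.2 hα1
  have hθ : HasDerivAt θhat (deriv θhat α) α := (hθhat α hα).hasDerivAt
  have hH : (α • fderiv ℝ (gradient Lh) (θhat α) + (1 - α) • fderiv ℝ (gradient L0) (θhat α))
      (deriv θhat α) = -(1 / (1 - α)) • gradient Lh (θhat α) :=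
    mixture_fderiv_apply_eq_of_eventually_eq_zero
      (hLhC.differentiable_gradient _).hasFDerivAt (hL0C.differentiable_gradient _).hasFDerivAt
      hθ (eventually_of_mem (isOpen_Ioo.mem_nhds hα) heq) hα1.ne'
  have hθ' : deriv θhat α = -(1 / (1 - α)) • Hinv α (gradient Lh (θhat α)) := by
    rw [← map_smul, ← hH, ← ContinuousLinearMap.comp_apply, (hHinv α hα).1,
      ContinuousLinearMap.id_apply]
  have hU : HasDerivAt (fun a => Ut (θhat a))
      (-(1 / (1 - α)) *
        ⟪∫ z, gradient (u z) (θhat α) ∂Dh, Hinv α (∫ z, gradient (ℓ z) (θhat α) ∂Dh)⟫) α := by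
    have := ((hUtC.differentiable one_ne_zero _).hasGradientAt).comp_hasDerivAt hθ
    rwa [hθ', real_inner_smul_right, hUtgrad, hLhgrad] at this
  refine ⟨hU, ?_⟩
  rw [hU.deriv, neg_mul, neg_pos]
  exact ⟨fun h => neg_of_mul_neg_right h hc.le, mul_neg_of_pos_of_neg hc⟩

/-- **Proposition 5.1 (benefit of scaling up a strategy).** An `α`-fraction of the population
implements a fixed strategy inducing `Dh`, the rest is non-strategic with distribution `D0`;
`θ̂(α)` is the equilibrium model of the mixture risk. The collective utility `U_α = Ũ(θ̂(α))`
is differentiable with `U_α' = −(1/(1−α)) Ψ(α)`, where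
`Ψ(α) = ⟨∫ ∇_θ u dDh, H(α)⁻¹ ∫ ∇_θ ℓ dDh⟩`; consequently `U_α' > 0 ↔ Ψ(α) < 0`. -/
theorem benefit_of_scaling_up
    {Z : Type*} [MeasurableSpace Z] {d : ℕ}
    (Dh D0 : Measure Z)
    (hDh : IsProbabilityMeasure Dh) (hD0 : IsProbabilityMeasure D0)
    (ℓ u : Z → EuclideanSpace ℝ (Fin d) → ℝ)
    -- `L^h(θ) = ∫ ℓ(z, θ) dDh`, twice continuously differentiable, gradient interchange
    (Lh : EuclideanSpace ℝ (Fin d) → ℝ) (hLh : ∀ θ, Lh θ = ∫ z, ℓ z θ ∂Dh)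
    (hLhC : ContDiff ℝ 2 Lh)
    (hLhgrad : ∀ θ, gradient Lh θ = ∫ z, gradient (ℓ z) θ ∂Dh)
    -- `L^0(θ) = ∫ ℓ(z, θ) dD0`, twice continuously differentiable, gradient interchange
    (L0 : EuclideanSpace ℝ (Fin d) → ℝ) (hL0 : ∀ θ, L0 θ = ∫ z, ℓ z θ ∂D0)
    (hL0C : ContDiff ℝ 2 L0)
    (hL0grad : ∀ θ, gradient L0 θ = ∫ z, gradient (ℓ z) θ ∂D0)
    -- `Ũ(θ) = ∫ u(z, θ) dDh`, continuously differentiable, gradient interchange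
    (Ut : EuclideanSpace ℝ (Fin d) → ℝ) (hUt : ∀ θ, Ut θ = ∫ z, u z θ ∂Dh)
    (hUtC : ContDiff ℝ 1 Ut)
    (hUtgrad : ∀ θ, gradient Ut θ = ∫ z, gradient (u z) θ ∂Dh)
    -- the equilibrium model `θ̂(α)` on `(0,1)`: differentiable and first-order condition
    (θhat : ℝ → EuclideanSpace ℝ (Fin d))
    (hθhat : ∀ α ∈ Set.Ioo (0 : ℝ) 1, DifferentiableAt ℝ θhat α)
    (heq : ∀ α ∈ Set.Ioo (0 : ℝ) 1,
      α • gradient Lh (θhat α) + (1 - α) • gradient L0 (θhat α) = 0)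
    -- the mixture Hessian `H(α) = α ∇²L^h(θ̂(α)) + (1−α) ∇²L^0(θ̂(α))` is invertible
    (Hinv : ℝ → EuclideanSpace ℝ (Fin d) →L[ℝ] EuclideanSpace ℝ (Fin d))
    (hHinv : ∀ α ∈ Set.Ioo (0 : ℝ) 1,
      (Hinv α).comp
          (α • fderiv ℝ (gradient Lh) (θhat α) + (1 - α) • fderiv ℝ (gradient L0) (θhat α)) =
        ContinuousLinearMap.id ℝ (EuclideanSpace ℝ (Fin d)) ∧
      (α • fderiv ℝ (gradient Lh) (θhat α) +
          (1 - α) • fderiv ℝ (gradient L0) (θhat α)).comp (Hinv α) =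
        ContinuousLinearMap.id ℝ (EuclideanSpace ℝ (Fin d))) :
    ∀ α ∈ Set.Ioo (0 : ℝ) 1,
      -- `U_α` is differentiable with the stated derivative ...
      HasDerivAt (fun a => Ut (θhat a))
        (-(1 / (1 - α)) *
          ⟪∫ z, gradient (u z) (θhat α) ∂Dh, Hinv α (∫ z, gradient (ℓ z) (θhat α) ∂Dh)⟫) α ∧
      -- ... and consequently `U_α' > 0` if and only if `Ψ(α) < 0`
      (0 < deriv (fun a => Ut (θhat a)) α ↔
        ⟪∫ z, gradient (u z) (θhat α) ∂Dh, Hinv α (∫ z, gradient (ℓ z) (θhat α) ∂Dh)⟫ < 0) :=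
  benefit_of_scaling_up_general Dh ℓ u Lh hLhC hLhgrad L0 hL0C Ut hUtC hUtgrad θhat hθhat heq Hinv
    hHinv
end

section
/- Let E be a real inner product space, r > 0, and p₁, p₂, p₃ ∈ E with ‖p₁‖ = ‖p₂‖ = ‖p₃‖ = r and p₁ + p₂ + p₃ = 0. For w = (w₁, w₂, w₃) in the probability simplex (wᵢ ≥ 0, w₁ + w₂ + w₃ = 1), define θ(w) := w₁p₁ + w₂p₂ + w₃p₃ and U(w) := −‖p₁ − θ(w)‖² − ‖p₂ − θ(w)‖² − Σᵢ wᵢ ‖pᵢ − θ(w)‖². Then: (i) for every w in the simplex, U(w) = −2r² − ‖θ(w) + p₃‖²; (ii) U(1/2, 1/2, 0) = −9r²/4; and (iii) for every w in the simplex, U(w) ≤ U(1/2, 1/2, 0), i.e., w♯ = (1/2, 1/2, 0) is an optimal collective strategy. -/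
/-!
Write `θ` for the barycentre of the anchors. The weighted sum in `U` is a variance, equal to
`r² - ‖θ‖²` because all anchors have norm `r`, and since `p₁ + p₂ = -p₃` the two remaining terms
combine with it into `U = -2r² - ‖θ + p₃‖²`. Maximizing `U` is thus minimizing the distance from
`-p₃` to the triangle, attained at the midpoint `-p₃/2` of the opposite edge: on the simplex
`⟪θ + p₃, p₃/2⟫ = r²(1 + 3w₃)/4 ≥ ‖p₃/2‖²`, which forces `‖θ + p₃‖² ≥ r²/4`.
-/

open scoped RealInnerProductSpace

section InnerProductSpace

variable {E : Type*} [NormedAddCommGroup E] [InnerProductSpace ℝ E]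

theorem Finset.sum_mul_norm_sub_sum_smul_sq {ι : Type*} (s : Finset ι) (w : ι → ℝ) (p : ι → E)
    (hw : ∑ i ∈ s, w i = 1) :
    ∑ i ∈ s, w i * ‖p i - ∑ j ∈ s, w j • p j‖ ^ 2 =
      ∑ i ∈ s, w i * ‖p i‖ ^ 2 - ‖∑ j ∈ s, w j • p j‖ ^ 2 := by
  set θ := ∑ j ∈ s, w j • p j
  have hcross : ∑ i ∈ s, w i * ⟪p i, θ⟫ = ‖θ‖ ^ 2 := by
    simp only [← real_inner_smul_left, ← sum_inner, real_inner_self_eq_norm_sq, θ]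
  simp only [norm_sub_sq_real, mul_add, mul_sub, Finset.sum_add_distrib, Finset.sum_sub_distrib,
    ← Finset.sum_mul, hw, mul_left_comm _ (2 : ℝ), ← Finset.mul_sum, hcross]
  ring

theorem inner_eq_neg_sq_div_two_of_add_add_eq_zero {a b c : E} {r : ℝ} (ha : ‖a‖ = r)
    (hb : ‖b‖ = r) (hc : ‖c‖ = r) (hsum : a + b + c = 0) : ⟪a, b⟫ = -r ^ 2 / 2 := by
  have hab : a + b = -c := eq_neg_of_add_eq_zero_left hsum
  have := norm_add_sq_real a b
  rw [hab, norm_neg, ha, hb, hc] at this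
  linarith

theorem sq_norm_le_sq_norm_of_sq_norm_le_inner {x v : E} (h : ‖v‖ ^ 2 ≤ ⟪x, v⟫) :
    ‖v‖ ^ 2 ≤ ‖x‖ ^ 2 := by
  have hx : ‖x‖ ^ 2 = ‖x - v‖ ^ 2 + 2 * ⟪x, v⟫ - ‖v‖ ^ 2 := by
    rw [norm_sub_sq_real]; ring
  linarith [sq_nonneg ‖x - v‖]

section Triangle

variable {p₁ p₂ p₃ θ : E} {r w₁ w₂ w₃ : ℝ}

theorem triangle_utility_eq (h1 : ‖p₁‖ = r) (h2 : ‖p₂‖ = r) (h3 : ‖p₃‖ = r)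
    (hsum : p₁ + p₂ + p₃ = 0) (hθ : θ = w₁ • p₁ + w₂ • p₂ + w₃ • p₃) (hw : w₁ + w₂ + w₃ = 1) :
    -‖p₁ - θ‖ ^ 2 - ‖p₂ - θ‖ ^ 2 -
        (w₁ * ‖p₁ - θ‖ ^ 2 + w₂ * ‖p₂ - θ‖ ^ 2 + w₃ * ‖p₃ - θ‖ ^ 2) =
      -2 * r ^ 2 - ‖θ + p₃‖ ^ 2 := by
  have hvariance : w₁ * ‖p₁ - θ‖ ^ 2 + w₂ * ‖p₂ - θ‖ ^ 2 + w₃ * ‖p₃ - θ‖ ^ 2 =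
      r ^ 2 - ‖θ‖ ^ 2 := by
    have := Finset.sum_mul_norm_sub_sum_smul_sq Finset.univ ![w₁, w₂, w₃] ![p₁, p₂, p₃]
      (by simpa [Fin.sum_univ_three] using hw)
    simp only [Fin.sum_univ_three, Matrix.cons_val_zero, Matrix.cons_val_one,
      Matrix.cons_val_two, Matrix.head_cons, Matrix.tail_cons, ← hθ, h1, h2, h3] at this
    linear_combination this + r ^ 2 * hw
  have hp₃ : p₁ + p₂ = -p₃ := eq_neg_of_add_eq_zero_left hsum
  have hinner : ⟪p₁, θ⟫ + ⟪p₂, θ⟫ = -⟪θ, p₃⟫ := by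
    rw [← inner_add_left, hp₃, inner_neg_left, real_inner_comm]
  rw [hvariance, norm_sub_sq_real, norm_sub_sq_real, norm_add_sq_real, h1, h2, h3]
  linear_combination 2 * hinner

theorem triangle_sq_norm_add_ge (h1 : ‖p₁‖ = r) (h2 : ‖p₂‖ = r) (h3 : ‖p₃‖ = r)
    (hsum : p₁ + p₂ + p₃ = 0) (hθ : θ = w₁ • p₁ + w₂ • p₂ + w₃ • p₃) (hw₃ : 0 ≤ w₃)
    (hw : w₁ + w₂ + w₃ = 1) : r ^ 2 / 4 ≤ ‖θ + p₃‖ ^ 2 := by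
  have h13 : ⟪p₁, p₃⟫ = -r ^ 2 / 2 :=
    inner_eq_neg_sq_div_two_of_add_add_eq_zero h1 h3 h2 (by rw [← hsum]; abel)
  have h23 : ⟪p₂, p₃⟫ = -r ^ 2 / 2 :=
    inner_eq_neg_sq_div_two_of_add_add_eq_zero h2 h3 h1 (by rw [← hsum]; abel)
  have hhalf : ‖(1 / 2 : ℝ) • p₃‖ ^ 2 = r ^ 2 / 4 := by
    rw [norm_smul, h3]; norm_num; ring
  have hproj : ⟪θ + p₃, (1 / 2 : ℝ) • p₃⟫ = r ^ 2 * (1 + 3 * w₃) / 4 := by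
    simp only [hθ, inner_add_left, real_inner_smul_left, real_inner_smul_right,
      real_inner_self_eq_norm_sq, h13, h23, h3]
    linear_combination (-r ^ 2 / 4) * hw
  rw [← hhalf]
  refine sq_norm_le_sq_norm_of_sq_norm_le_inner ?_
  rw [hhalf, hproj]
  linarith [mul_nonneg (sq_nonneg r) hw₃]

end Triangle

end InnerProductSpace

theorem triangle_example_optimal_collective_general
    {E : Type*} [NormedAddCommGroup E] [InnerProductSpace ℝ E]
    (r : ℝ) (p₁ p₂ p₃ : E)
    (h1 : ‖p₁‖ = r) (h2 : ‖p₂‖ = r) (h3 : ‖p₃‖ = r) (hsum : p₁ + p₂ + p₃ = 0)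
    (θ : ℝ → ℝ → ℝ → E)
    (hθ : ∀ w₁ w₂ w₃, θ w₁ w₂ w₃ = w₁ • p₁ + w₂ • p₂ + w₃ • p₃)
    (U : ℝ → ℝ → ℝ → ℝ)
    (hU : ∀ w₁ w₂ w₃, U w₁ w₂ w₃ =
      -‖p₁ - θ w₁ w₂ w₃‖ ^ 2 - ‖p₂ - θ w₁ w₂ w₃‖ ^ 2 -
        (w₁ * ‖p₁ - θ w₁ w₂ w₃‖ ^ 2 + w₂ * ‖p₂ - θ w₁ w₂ w₃‖ ^ 2 +
          w₃ * ‖p₃ - θ w₁ w₂ w₃‖ ^ 2)) :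
    -- (i)
    (∀ w₁ w₂ w₃ : ℝ, 0 ≤ w₁ → 0 ≤ w₂ → 0 ≤ w₃ → w₁ + w₂ + w₃ = 1 →
      U w₁ w₂ w₃ = -2 * r ^ 2 - ‖θ w₁ w₂ w₃ + p₃‖ ^ 2) ∧
    -- (ii)
    U (1 / 2) (1 / 2) 0 = -9 * r ^ 2 / 4 ∧
    -- (iii)
    (∀ w₁ w₂ w₃ : ℝ, 0 ≤ w₁ → 0 ≤ w₂ → 0 ≤ w₃ → w₁ + w₂ + w₃ = 1 →
      U w₁ w₂ w₃ ≤ U (1 / 2) (1 / 2) 0) := by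
  have hUθ : ∀ w₁ w₂ w₃, w₁ + w₂ + w₃ = 1 → U w₁ w₂ w₃ = -2 * r ^ 2 - ‖θ w₁ w₂ w₃ + p₃‖ ^ 2 :=
    fun w₁ w₂ w₃ hw => (hU w₁ w₂ w₃).trans (triangle_utility_eq h1 h2 h3 hsum (hθ w₁ w₂ w₃) hw)
  have hmidpoint : θ (1 / 2) (1 / 2) 0 + p₃ = (1 / 2 : ℝ) • p₃ := by
    rw [hθ]
    linear_combination (norm := module) (1 / 2 : ℝ) • hsum
  have hmax : U (1 / 2) (1 / 2) 0 = -9 * r ^ 2 / 4 := by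
    rw [hUθ _ _ _ (by norm_num), hmidpoint, norm_smul, h3]
    norm_num
    ring
  refine ⟨fun w₁ w₂ w₃ _ _ _ hw => hUθ w₁ w₂ w₃ hw, hmax, ?_⟩
  intro w₁ w₂ w₃ _ _ hw₃ hw
  rw [hUθ w₁ w₂ w₃ hw, hmax]
  linarith [triangle_sq_norm_add_ge h1 h2 h3 hsum (hθ w₁ w₂ w₃) hw₃ hw]

/-- **The equilateral-triangle example (Appendix C): the optimal collective strategy.**
With anchors `p₁, p₂, p₃` of norm `r` summing to zero, model `θ(w) = ∑ wᵢ pᵢ` and collective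
utility `U(w) = −‖p₁ − θ‖² − ‖p₂ − θ‖² − ∑ wᵢ ‖pᵢ − θ‖²`: (i) on the simplex
`U(w) = −2r² − ‖θ(w) + p₃‖²`; (ii) `U(1/2, 1/2, 0) = −9r²/4`; (iii) `w♯ = (1/2, 1/2, 0)`
maximizes `U` over the simplex. -/
theorem triangle_example_optimal_collective
    {E : Type*} [NormedAddCommGroup E] [InnerProductSpace ℝ E]
    (r : ℝ) (hr : 0 < r) (p₁ p₂ p₃ : E)
    (h1 : ‖p₁‖ = r) (h2 : ‖p₂‖ = r) (h3 : ‖p₃‖ = r) (hsum : p₁ + p₂ + p₃ = 0)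
    (θ : ℝ → ℝ → ℝ → E)
    (hθ : ∀ w₁ w₂ w₃, θ w₁ w₂ w₃ = w₁ • p₁ + w₂ • p₂ + w₃ • p₃)
    (U : ℝ → ℝ → ℝ → ℝ)
    (hU : ∀ w₁ w₂ w₃, U w₁ w₂ w₃ =
      -‖p₁ - θ w₁ w₂ w₃‖ ^ 2 - ‖p₂ - θ w₁ w₂ w₃‖ ^ 2 -
        (w₁ * ‖p₁ - θ w₁ w₂ w₃‖ ^ 2 + w₂ * ‖p₂ - θ w₁ w₂ w₃‖ ^ 2 +
          w₃ * ‖p₃ - θ w₁ w₂ w₃‖ ^ 2)) :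
    -- (i)
    (∀ w₁ w₂ w₃ : ℝ, 0 ≤ w₁ → 0 ≤ w₂ → 0 ≤ w₃ → w₁ + w₂ + w₃ = 1 →
      U w₁ w₂ w₃ = -2 * r ^ 2 - ‖θ w₁ w₂ w₃ + p₃‖ ^ 2) ∧
    -- (ii)
    U (1 / 2) (1 / 2) 0 = -9 * r ^ 2 / 4 ∧
    -- (iii)
    (∀ w₁ w₂ w₃ : ℝ, 0 ≤ w₁ → 0 ≤ w₂ → 0 ≤ w₃ → w₁ + w₂ + w₃ = 1 →
      U w₁ w₂ w₃ ≤ U (1 / 2) (1 / 2) 0) :=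
  triangle_example_optimal_collective_general r p₁ p₂ p₃ h1 h2 h3 hsum θ hθ U hU
end

section
/- Let E be a real inner product space, r > 0, and p₁, p₂, p₃ ∈ E with ‖p₁‖ = ‖p₂‖ = ‖p₃‖ = r and p₁ + p₂ + p₃ = 0. For w = (w₁, w₂, w₃) in the probability simplex define θ(w) := w₁p₁ + w₂p₂ + w₃p₃ and U(w) := −‖p₁ − θ(w)‖² − ‖p₂ − θ(w)‖² − Σᵢ wᵢ ‖pᵢ − θ(w)‖². Then: (i) U(1/3, 1/3, 1/3) = −3r² and the benefit of coordination B := U(1/2, 1/2, 0) − U(1/3, 1/3, 1/3) equals (3/4)r²; (ii) θ = 0 is the unique minimizer over E of the learner's risk θ ↦ (1/3)Σᵢ ‖pᵢ − θ‖², so θ* = 0 is the learner's best response to w* = (1/3, 1/3, 1/3); and (iii) for the fixed model θ* = 0, the population objective w ↦ −‖p₁‖² − ‖p₂‖² − Σᵢ wᵢ ‖pᵢ‖² is constant equal to −3r² on the simplex, so w* is a population best response to θ* and (w*, θ* = 0) is a performatively stable point. -/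
/-! With `p₁ + p₂ + p₃ = 0` the learner's risk splits as `∑ᵢ ‖pᵢ - θ‖² = ∑ᵢ ‖pᵢ‖² + 3‖θ‖²`
(the cross term is `⟪∑ᵢ pᵢ, θ⟫ = 0`), so `θ = 0` is its unique minimizer, and `θ(1/3, 1/3, 1/3) = 0`.
For the coordinated strategy, `θ(1/2, 1/2, 0) = (p₁ + p₂)/2 = -p₃/2`, and the parallelogram law with
`‖p₁ + p₂‖ = ‖p₃‖` gives `‖p₁ - p₂‖² = 3r²`; everything else is arithmetic. -/

open Finset

section

variable {E : Type*} [SeminormedAddCommGroup E] [InnerProductSpace ℝ E]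

theorem sum_norm_sub_sq_of_sum_eq_zero {ι : Type*} (s : Finset ι) (p : ι → E)
    (hp : ∑ i ∈ s, p i = 0) (x : E) :
    ∑ i ∈ s, ‖p i - x‖ ^ 2 = ∑ i ∈ s, ‖p i‖ ^ 2 + #s * ‖x‖ ^ 2 := by
  simp_rw [norm_sub_sq_real]
  rw [sum_add_distrib, sum_sub_distrib, ← mul_sum, ← sum_inner, hp, inner_zero_left]
  simp

theorem norm_sub_sq_three_of_add_add_eq_zero {p₁ p₂ p₃ : E} (h : p₁ + p₂ + p₃ = 0) (x : E) :
    ‖p₁ - x‖ ^ 2 + ‖p₂ - x‖ ^ 2 + ‖p₃ - x‖ ^ 2 =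
      ‖p₁‖ ^ 2 + ‖p₂‖ ^ 2 + ‖p₃‖ ^ 2 + 3 * ‖x‖ ^ 2 := by
  have := sum_norm_sub_sq_of_sum_eq_zero univ ![p₁, p₂, p₃] (by simpa [Fin.sum_univ_three]) x
  simpa [Fin.sum_univ_three] using this

theorem norm_sub_sq_of_add_add_eq_zero {a b c : E} (h : a + b + c = 0) :
    ‖a - b‖ ^ 2 = 2 * (‖a‖ ^ 2 + ‖b‖ ^ 2) - ‖c‖ ^ 2 := by
  have hab : ‖a + b‖ = ‖c‖ := by rw [eq_neg_of_add_eq_zero_left h, norm_neg]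
  linarith [parallelogram_law_with_norm ℝ a b, congrArg (· ^ 2) hab]

theorem norm_smul_sq (t : ℝ) (x : E) : ‖t • x‖ ^ 2 = t ^ 2 * ‖x‖ ^ 2 := by
  rw [norm_smul, Real.norm_eq_abs, mul_pow, sq_abs]

end

theorem triangle_example_stable_point_general
    {E : Type*} [NormedAddCommGroup E] [InnerProductSpace ℝ E]
    (r : ℝ) (p₁ p₂ p₃ : E)
    (h1 : ‖p₁‖ = r) (h2 : ‖p₂‖ = r) (h3 : ‖p₃‖ = r) (hsum : p₁ + p₂ + p₃ = 0)
    (θ : ℝ → ℝ → ℝ → E)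
    (hθ : ∀ w₁ w₂ w₃, θ w₁ w₂ w₃ = w₁ • p₁ + w₂ • p₂ + w₃ • p₃)
    (U : ℝ → ℝ → ℝ → ℝ)
    (hU : ∀ w₁ w₂ w₃, U w₁ w₂ w₃ =
      -‖p₁ - θ w₁ w₂ w₃‖ ^ 2 - ‖p₂ - θ w₁ w₂ w₃‖ ^ 2 -
        (w₁ * ‖p₁ - θ w₁ w₂ w₃‖ ^ 2 + w₂ * ‖p₂ - θ w₁ w₂ w₃‖ ^ 2 +
          w₃ * ‖p₃ - θ w₁ w₂ w₃‖ ^ 2)) :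
    -- (i) utility at the selfish equilibrium and the benefit of coordination
    (U (1 / 3) (1 / 3) (1 / 3) = -3 * r ^ 2 ∧
      U (1 / 2) (1 / 2) 0 - U (1 / 3) (1 / 3) (1 / 3) = 3 / 4 * r ^ 2) ∧
    -- (ii) `θ* = 0` is the unique minimizer of the learner's risk under `w* = (1/3,1/3,1/3)`
    ((∀ θ' : E,
        1 / 3 * (‖p₁ - (0 : E)‖ ^ 2 + ‖p₂ - (0 : E)‖ ^ 2 + ‖p₃ - (0 : E)‖ ^ 2) ≤
          1 / 3 * (‖p₁ - θ'‖ ^ 2 + ‖p₂ - θ'‖ ^ 2 + ‖p₃ - θ'‖ ^ 2)) ∧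
      (∀ θ' : E,
        1 / 3 * (‖p₁ - θ'‖ ^ 2 + ‖p₂ - θ'‖ ^ 2 + ‖p₃ - θ'‖ ^ 2) =
          1 / 3 * (‖p₁ - (0 : E)‖ ^ 2 + ‖p₂ - (0 : E)‖ ^ 2 + ‖p₃ - (0 : E)‖ ^ 2) →
        θ' = 0)) ∧
    -- (iii) for the fixed model `θ* = 0` the population objective is constant on the simplex
    (∀ w₁ w₂ w₃ : ℝ, 0 ≤ w₁ → 0 ≤ w₂ → 0 ≤ w₃ → w₁ + w₂ + w₃ = 1 →
      -‖p₁‖ ^ 2 - ‖p₂‖ ^ 2 - (w₁ * ‖p₁‖ ^ 2 + w₂ * ‖p₂‖ ^ 2 + w₃ * ‖p₃‖ ^ 2) =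
        -3 * r ^ 2) := by
  have risk := norm_sub_sq_three_of_add_add_eq_zero hsum
  have risk_zero := risk 0
  rw [norm_zero] at risk_zero
  have hp₃ : p₃ = -(p₁ + p₂) := eq_neg_of_add_eq_zero_right hsum
  have θ_selfish : θ (1 / 3) (1 / 3) (1 / 3) = 0 := by
    rw [hθ, ← smul_add, ← smul_add, hsum, smul_zero]
  have θ_coord : θ (1 / 2) (1 / 2) 0 = (1 / 2 : ℝ) • (p₁ + p₂) := by rw [hθ]; module
  have hdiff : ‖p₁ - p₂‖ ^ 2 = 3 * r ^ 2 := by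
    rw [norm_sub_sq_of_add_add_eq_zero hsum, h1, h2, h3]; ring
  have d₁ : p₁ - θ (1 / 2) (1 / 2) 0 = (1 / 2 : ℝ) • (p₁ - p₂) := by rw [θ_coord]; module
  have d₂ : p₂ - θ (1 / 2) (1 / 2) 0 = (-1 / 2 : ℝ) • (p₁ - p₂) := by rw [θ_coord]; module
  have d₃ : p₃ - θ (1 / 2) (1 / 2) 0 = (3 / 2 : ℝ) • p₃ := by rw [θ_coord, hp₃]; module
  have U_selfish : U (1 / 3) (1 / 3) (1 / 3) = -3 * r ^ 2 := by
    rw [hU, θ_selfish]; simp only [sub_zero, h1, h2, h3]; ring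
  refine ⟨⟨U_selfish, ?_⟩, ⟨fun θ' => ?_, fun θ' h => ?_⟩, fun w₁ w₂ w₃ _ _ _ hw => ?_⟩
  · rw [U_selfish, hU, d₁, d₂, d₃, norm_smul_sq, norm_smul_sq, norm_smul_sq, hdiff, h3]; ring
  · rw [risk θ', risk_zero]; nlinarith [sq_nonneg ‖θ'‖]
  · rw [risk θ', risk_zero] at h
    exact norm_eq_zero.mp (pow_eq_zero_iff two_ne_zero |>.mp (by linarith))
  · rw [h1, h2, h3]; linear_combination (-(r ^ 2)) * hw

/-- **The equilateral-triangle example (Appendix C): the selfish stable point and the benefit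
of coordination.** (i) `U(1/3, 1/3, 1/3) = −3r²` and
`B = U(1/2, 1/2, 0) − U(1/3, 1/3, 1/3) = (3/4)r²`; (ii) `θ* = 0` is the unique minimizer of
the learner's risk `θ ↦ (1/3)∑ᵢ ‖pᵢ − θ‖²`, so it is the learner's best response to
`w* = (1/3, 1/3, 1/3)`; (iii) for the fixed model `θ* = 0` the population objective is
constant `−3r²` on the simplex, so `w*` is a population best response to `θ*` and
`(w*, θ* = 0)` is performatively stable. -/
theorem triangle_example_stable_point
    {E : Type*} [NormedAddCommGroup E] [InnerProductSpace ℝ E]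
    (r : ℝ) (hr : 0 < r) (p₁ p₂ p₃ : E)
    (h1 : ‖p₁‖ = r) (h2 : ‖p₂‖ = r) (h3 : ‖p₃‖ = r) (hsum : p₁ + p₂ + p₃ = 0)
    (θ : ℝ → ℝ → ℝ → E)
    (hθ : ∀ w₁ w₂ w₃, θ w₁ w₂ w₃ = w₁ • p₁ + w₂ • p₂ + w₃ • p₃)
    (U : ℝ → ℝ → ℝ → ℝ)
    (hU : ∀ w₁ w₂ w₃, U w₁ w₂ w₃ =
      -‖p₁ - θ w₁ w₂ w₃‖ ^ 2 - ‖p₂ - θ w₁ w₂ w₃‖ ^ 2 -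
        (w₁ * ‖p₁ - θ w₁ w₂ w₃‖ ^ 2 + w₂ * ‖p₂ - θ w₁ w₂ w₃‖ ^ 2 +
          w₃ * ‖p₃ - θ w₁ w₂ w₃‖ ^ 2)) :
    -- (i) utility at the selfish equilibrium and the benefit of coordination
    (U (1 / 3) (1 / 3) (1 / 3) = -3 * r ^ 2 ∧
      U (1 / 2) (1 / 2) 0 - U (1 / 3) (1 / 3) (1 / 3) = 3 / 4 * r ^ 2) ∧
    -- (ii) `θ* = 0` is the unique minimizer of the learner's risk under `w* = (1/3,1/3,1/3)`
    ((∀ θ' : E,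
        1 / 3 * (‖p₁ - (0 : E)‖ ^ 2 + ‖p₂ - (0 : E)‖ ^ 2 + ‖p₃ - (0 : E)‖ ^ 2) ≤
          1 / 3 * (‖p₁ - θ'‖ ^ 2 + ‖p₂ - θ'‖ ^ 2 + ‖p₃ - θ'‖ ^ 2)) ∧
      (∀ θ' : E,
        1 / 3 * (‖p₁ - θ'‖ ^ 2 + ‖p₂ - θ'‖ ^ 2 + ‖p₃ - θ'‖ ^ 2) =
          1 / 3 * (‖p₁ - (0 : E)‖ ^ 2 + ‖p₂ - (0 : E)‖ ^ 2 + ‖p₃ - (0 : E)‖ ^ 2) →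
        θ' = 0)) ∧
    -- (iii) for the fixed model `θ* = 0` the population objective is constant on the simplex
    (∀ w₁ w₂ w₃ : ℝ, 0 ≤ w₁ → 0 ≤ w₂ → 0 ≤ w₃ → w₁ + w₂ + w₃ = 1 →
      -‖p₁‖ ^ 2 - ‖p₂‖ ^ 2 - (w₁ * ‖p₁‖ ^ 2 + w₂ * ‖p₂‖ ^ 2 + w₃ * ‖p₃‖ ^ 2) =
        -3 * r ^ 2) :=
  triangle_example_stable_point_general r p₁ p₂ p₃ h1 h2 h3 hsum θ hθ U hU
end
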